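/- Let (h₁, h₂, h₃) be a centered random vector in ℝ³ with finite second moments, and let H denote the random symmetric 2×2 matrix with rows (h₁, h₃), (h₃, h₂). Assume H is rotation invariant in law, i.e., for every θ ∈ ℝ the matrix R(θ)ᵀ H R(θ) has the same law as H, where R(θ) is the rotation matrix with rows (cos θ, −sin θ), (sin θ, cos θ). Then E[h₁ h₃] = E[h₂ h₃] = 0 and E[h₁²] = E[h₂²] = 2·E[h₃²] + E[h₁ h₂]. Equivalently, setting σ² := E[h₃²] and c := E[h₁h₂], the covariance matrix of (h₁, h₂, h₃) has rows (2σ²+c, c, 0), (c, 2σ²+c, 0), (0, 0, σ²). -/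

import Mathlib

open MeasureTheory Real Matrix

instance {m n : Type*} : MeasurableSpace (Matrix m n ℝ) :=
  MeasurableSpace.pi

/-- The rotation matrix of angle `θ` in `ℝ²`. -/
noncomputable def rotMat (θ : ℝ) : Matrix (Fin 2) (Fin 2) ℝ :=
  !![Real.cos θ, -Real.sin θ; Real.sin θ, Real.cos θ]

/-
Conjugation by `rotMat (π / 2)` swaps `h₁` and `h₂` and negates `h₃`, so `E[h₁²] = E[h₂²]` and
`E[h₂h₃] = -E[h₁h₃]`. Conjugation by `rotMat (π / 4)` turns the off-diagonal entry into
`(h₂ - h₁) / 2` and the diagonal difference into `2h₃`; invariance of `E[(M₀₀ - M₁₁) M₀₁]` and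
`E[M₀₁²]` then gives `E[h₁h₃] = E[h₂h₃]` and `E[(h₁ - h₂)²] = 4E[h₃²]`, and linear algebra
finishes the proof.
-/

section

variable {Ω : Type*} [MeasurableSpace Ω] {P : Measure Ω} {f g k : Ω → ℝ}

lemma aemeasurable_fin_two_matrix {a b c d : Ω → ℝ} (ha : AEMeasurable a P) (hb : AEMeasurable b P)
    (hc : AEMeasurable c P) (hd : AEMeasurable d P) :
    AEMeasurable (fun ω => !![a ω, b ω; c ω, d ω]) P := by
  refine aemeasurable_pi_lambda _ fun i => aemeasurable_pi_lambda _ fun j => ?_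
  fin_cases i <;> fin_cases j <;> assumption

lemma integral_sub_mul_of_memLp (hf : MemLp f 2 P) (hg : MemLp g 2 P) (hk : MemLp k 2 P) :
    ∫ ω, (f ω - g ω) * k ω ∂P = ∫ ω, f ω * k ω ∂P - ∫ ω, g ω * k ω ∂P := by
  simp_rw [sub_mul]
  exact integral_sub (hf.integrable_mul hk) (hg.integrable_mul hk)

lemma integral_sub_sq_of_memLp (hf : MemLp f 2 P) (hg : MemLp g 2 P) :
    ∫ ω, (f ω - g ω) ^ 2 ∂P = ∫ ω, f ω ^ 2 ∂P - 2 * ∫ ω, f ω * g ω ∂P + ∫ ω, g ω ^ 2 ∂P := by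
  have hfg : Integrable (fun ω => 2 * (f ω * g ω)) P := (hf.integrable_mul hg).const_mul 2
  simp_rw [sub_sq, mul_assoc]
  have hfg' : Integrable (fun ω => f ω ^ 2 - 2 * (f ω * g ω)) P := hf.integrable_sq.sub hfg
  rw [integral_add hfg' hg.integrable_sq,
    integral_sub hf.integrable_sq hfg, integral_const_mul]

end

lemma measurable_rotMat_conj (θ : ℝ) :
    Measurable fun M : Matrix (Fin 2) (Fin 2) ℝ => (rotMat θ)ᵀ * M * rotMat θ := by
  refine measurable_pi_lambda _ fun i => measurable_pi_lambda _ fun j => ?_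
  simp only [Matrix.mul_apply, Fin.sum_univ_two]
  fun_prop

lemma rotMat_pi_div_two_conj (a b c : ℝ) :
    (rotMat (π / 2))ᵀ * !![a, c; c, b] * rotMat (π / 2) = !![b, -c; -c, a] := by
  ext i j
  fin_cases i <;> fin_cases j <;>
    simp [rotMat, Matrix.mul_apply, Fin.sum_univ_two]

lemma rotMat_pi_div_four_conj (a b c : ℝ) :
    (rotMat (π / 4))ᵀ * !![a, c; c, b] * rotMat (π / 4) =
      !![(a + b) / 2 + c, (b - a) / 2; (b - a) / 2, (a + b) / 2 - c] := by
  ext i j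
  fin_cases i <;> fin_cases j <;>
    simp only [rotMat, cos_pi_div_four, sin_pi_div_four, Fin.zero_eta, Fin.mk_one, Fin.isValue,
      Matrix.mul_apply, transpose_apply, of_apply, cons_val', cons_val_zero, cons_val_one,
      cons_val_fin_one, Fin.sum_univ_two] <;>
    grind

theorem stmt_3_general {Ω : Type*} [MeasurableSpace Ω] (P : Measure Ω)
    (h₁ h₂ h₃ : Ω → ℝ)
    (hL1 : MemLp h₁ 2 P) (hL2 : MemLp h₂ 2 P) (hL3 : MemLp h₃ 2 P)
    (H : Ω → Matrix (Fin 2) (Fin 2) ℝ)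
    (hH : H = fun ω => !![h₁ ω, h₃ ω; h₃ ω, h₂ ω])
    (hrot : ∀ θ : ℝ,
      Measure.map (fun ω => (rotMat θ)ᵀ * H ω * rotMat θ) P = Measure.map H P) :
    (∫ ω, h₁ ω * h₃ ω ∂P = 0) ∧ (∫ ω, h₂ ω * h₃ ω ∂P = 0) ∧
    (∫ ω, h₁ ω ^ 2 ∂P = ∫ ω, h₂ ω ^ 2 ∂P) ∧
    (∫ ω, h₁ ω ^ 2 ∂P = 2 * (∫ ω, h₃ ω ^ 2 ∂P) + ∫ ω, h₁ ω * h₂ ω ∂P) := by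
  have hHm : AEMeasurable H P := hH ▸ aemeasurable_fin_two_matrix
    hL1.aemeasurable hL3.aemeasurable hL3.aemeasurable hL2.aemeasurable
  have hinv (θ : ℝ) {f : Matrix (Fin 2) (Fin 2) ℝ → ℝ} (hf : Measurable f) :
      ∫ ω, f ((rotMat θ)ᵀ * H ω * rotMat θ) ∂P = ∫ ω, f (H ω) ∂P :=
    (ProbabilityTheory.IdentDistrib.comp
      ⟨(measurable_rotMat_conj θ).comp_aemeasurable hHm, hHm, hrot θ⟩ hf).integral_eq
  subst hH
  have E₁ : ∫ ω, -(h₂ ω * h₃ ω) ∂P = ∫ ω, h₁ ω * h₃ ω ∂P := by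
    simpa [rotMat_pi_div_two_conj] using hinv (π / 2) (f := fun M => M 0 0 * M 0 1) (by fun_prop)
  have E₂ : ∫ ω, h₂ ω ^ 2 ∂P = ∫ ω, h₁ ω ^ 2 ∂P := by
    simpa [rotMat_pi_div_two_conj] using hinv (π / 2) (f := fun M => M 0 0 ^ 2) (by fun_prop)
  have E₃ : ∫ ω, -((h₁ ω - h₂ ω) * h₃ ω) ∂P = ∫ ω, (h₁ ω - h₂ ω) * h₃ ω ∂P := by
    convert hinv (π / 4) (f := fun M => (M 0 0 - M 1 1) * M 0 1) (by fun_prop) using 3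
    · simp only [rotMat_pi_div_four_conj, of_apply, cons_val', cons_val_zero, cons_val_one,
        cons_val_fin_one]
      ring
    · simp only [of_apply, cons_val', cons_val_zero, cons_val_one, cons_val_fin_one]
  have E₄ : ∫ ω, 4⁻¹ * (h₁ ω - h₂ ω) ^ 2 ∂P = ∫ ω, h₃ ω ^ 2 ∂P := by
    convert hinv (π / 4) (f := fun M => M 0 1 ^ 2) (by fun_prop) using 3
    · simp only [rotMat_pi_div_four_conj, of_apply, cons_val', cons_val_zero, cons_val_one,
        cons_val_fin_one]
      ring
    · simp only [of_apply, cons_val', cons_val_zero, cons_val_one, cons_val_fin_one]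
  rw [integral_neg] at E₁ E₃
  rw [integral_sub_mul_of_memLp hL1 hL2 hL3] at E₃
  rw [integral_const_mul, integral_sub_sq_of_memLp hL1 hL2] at E₄
  exact ⟨by linarith, by linarith, by linarith, by linarith⟩

/-- If the random symmetric matrix `H = !![h₁, h₃; h₃, h₂]`, built from a centered,
square-integrable random vector `(h₁,h₂,h₃)`, is rotation invariant in law,
then `E[h₁h₃] = E[h₂h₃] = 0` and `E[h₁²] = E[h₂²] = 2E[h₃²] + E[h₁h₂]`. -/
theorem stmt_3 {Ω : Type*} [MeasurableSpace Ω] (P : Measure Ω) [IsProbabilityMeasure P]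
    (h₁ h₂ h₃ : Ω → ℝ)
    (hL1 : MemLp h₁ 2 P) (hL2 : MemLp h₂ 2 P) (hL3 : MemLp h₃ 2 P)
    (hc1 : ∫ ω, h₁ ω ∂P = 0) (hc2 : ∫ ω, h₂ ω ∂P = 0) (hc3 : ∫ ω, h₃ ω ∂P = 0)
    (H : Ω → Matrix (Fin 2) (Fin 2) ℝ)
    (hH : H = fun ω => !![h₁ ω, h₃ ω; h₃ ω, h₂ ω])
    (hrot : ∀ θ : ℝ,
      Measure.map (fun ω => (rotMat θ)ᵀ * H ω * rotMat θ) P = Measure.map H P) :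
    (∫ ω, h₁ ω * h₃ ω ∂P = 0) ∧ (∫ ω, h₂ ω * h₃ ω ∂P = 0) ∧
    (∫ ω, h₁ ω ^ 2 ∂P = ∫ ω, h₂ ω ^ 2 ∂P) ∧
    (∫ ω, h₁ ω ^ 2 ∂P = 2 * (∫ ω, h₃ ω ^ 2 ∂P) + ∫ ω, h₁ ω * h₂ ω ∂P) :=
  stmt_3_general P h₁ h₂ h₃ hL1 hL2 hL3 H hH hrot
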